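/- arXiv:1106.2482 — 2 statements merged into one kernel-verified Lean document; each statement's English description precedes it below -/
import Mathlib

section
/- If f : Δ_k → ℝ is continuous, then the sequence of multivariate Bernstein approximants 𝔹_n(f | x) = ∑_{v ∈ ℕ^k, |v| ≤ n} f(v/n) · B_{v,n}(x) converges to f uniformly on Δ_k as n → ∞. -/
/-!
In the barycentric coordinates `(1 - |x|, x₁, …, x_k)`, indexed by `Option (Fin k)`, the weights
`B_{v,n}(x)` are the multinomial distribution of `n` draws: they sum to `1` by the multinomial
theorem, and the coordinate `v i` has the binomial distribution `B(n, x i)`. The one-dimensional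
variance identity then gives `∑_v (v i / n - x i)² B_{v,n}(x) = x i (1 - x i) / n`, so by
Chebyshev the `v` with `v / n` at (sup-)distance `≥ δ` from `x` carry weight at most
`k / (δ² n)`. Uniform continuity of `f` on the compact simplex controls the other `v`.
-/

/-- The `k`-dimensional simplex `Δ_k ⊆ [0,1]^k`. -/
def stdSimplex' (k : ℕ) : Set (Fin k → ℝ) :=
  {x | (∀ i, x i ∈ Set.Icc (0 : ℝ) 1) ∧ ∑ i, x i ≤ 1}

/-- The multivariate Bernstein polynomial `B_{v,n}(x)` on the `k`-simplex. -/
noncomputable def bern (k n : ℕ) (v : Fin k → ℕ) (x : Fin k → ℝ) : ℝ :=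
  ((n.factorial : ℝ) / ((∏ i, ((v i).factorial : ℝ)) * ((n - ∑ i, v i).factorial : ℝ))) *
    (∏ i, x i ^ v i) * (1 - ∑ i, x i) ^ (n - ∑ i, v i)

open Finset Filter unitInterval

theorem sum_piAntidiag_cons_mul_multinomial {ι R : Type*} [DecidableEq ι] [CommSemiring R]
    {i : ι} {s : Finset ι} (hi : i ∉ s) (g : ℕ → R) (y : ι → R) (n : ℕ) :
    ∑ w ∈ piAntidiag (cons i s hi) n,
        g (w i) * (Nat.multinomial (cons i s hi) w * ∏ j ∈ cons i s hi, y j ^ w j) =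
      ∑ p ∈ antidiagonal n, g p.1 * (n.choose p.1 * y i ^ p.1 * (∑ j ∈ s, y j) ^ p.2) := by
  rw [piAntidiag_cons, sum_disjiUnion]
  refine sum_congr rfl fun p hp => ?_
  rw [sum_map, sum_pow_eq_sum_piAntidiag, mul_sum, mul_sum]
  refine sum_congr rfl fun w hw => ?_
  rw [mem_piAntidiag] at hw
  rw [HasAntidiagonal.mem_antidiagonal] at hp
  have hwi : w i = 0 := by_contra fun h => hi (hw.2 i h)
  have hs : ∀ j ∈ s, (w + fun t => if t = i then p.1 else 0) j = w j := fun j hj => by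
    simp [ne_of_mem_of_not_mem hj hi]
  simp only [addRightEmbedding_apply, Nat.multinomial_cons, prod_cons, Nat.multinomial_congr hs,
    prod_congr rfl fun j hj => congrArg (y j ^ ·) (hs j hj), sum_congr rfl hs, hw.1]
  simp only [Pi.add_apply, hwi, ↓reduceIte, zero_add, hp, Nat.cast_mul]
  ring

theorem stdSimplex'_eq (k : ℕ) : stdSimplex' k = Set.Icc 0 1 ∩ {x | ∑ i, x i ≤ 1} := by
  ext x
  simp [stdSimplex', Pi.le_def, forall_and]

theorem isCompact_stdSimplex' (k : ℕ) : IsCompact (stdSimplex' k) := by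
  rw [stdSimplex'_eq]
  exact isCompact_Icc.inter_right (isClosed_le (by fun_prop) continuous_const)

theorem dist_sq_le_sum_sq {ι : Type*} [Fintype ι] (y x : ι → ℝ) :
    dist y x ^ 2 ≤ ∑ i, (y i - x i) ^ 2 := by
  have hle : dist y x ≤ √(∑ i, (y i - x i) ^ 2) := by
    refine (dist_pi_le_iff (Real.sqrt_nonneg _)).2 fun i => ?_
    rw [Real.dist_eq, ← Real.sqrt_sq_eq_abs]
    exact Real.sqrt_le_sqrt (single_le_sum (f := fun j => (y j - x j) ^ 2)
      (fun j _ => sq_nonneg _) (mem_univ i))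
  calc dist y x ^ 2 ≤ √(∑ i, (y i - x i) ^ 2) ^ 2 := by gcongr
    _ = ∑ i, (y i - x i) ^ 2 := Real.sq_sqrt (sum_nonneg fun i _ => sq_nonneg _)

namespace MvBernstein

variable {k n : ℕ}

def multiIndices (k n : ℕ) : Finset (Fin k → ℕ) :=
  (Fintype.piFinset fun _ : Fin k => range (n + 1)).filter fun v => ∑ i, v i ≤ n

theorem mem_multiIndices {v : Fin k → ℕ} : v ∈ multiIndices k n ↔ ∑ i, v i ≤ n := by
  simp only [multiIndices, mem_filter, Fintype.mem_piFinset, mem_range, and_iff_right_iff_imp]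
  exact fun hv i => Nat.lt_succ_of_le ((single_le_sum (fun j _ => Nat.zero_le (v j))
    (mem_univ i)).trans hv)

def homogenize (n : ℕ) (v : Fin k → ℕ) : Option (Fin k) → ℕ :=
  fun o => o.elim (n - ∑ i, v i) v

def baryCoords (x : Fin k → ℝ) : Option (Fin k) → ℝ :=
  fun o => o.elim (1 - ∑ i, x i) x

theorem sum_baryCoords (x : Fin k → ℝ) : ∑ o, baryCoords x o = 1 := by
  simp [baryCoords, Fintype.sum_option]

theorem bern_eq_multinomial {v : Fin k → ℕ} (hv : ∑ i, v i ≤ n) (x : Fin k → ℝ) :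
    bern k n v x =
      Nat.multinomial univ (homogenize n v) * ∏ o, baryCoords x o ^ homogenize n v o := by
  have hspec := Nat.multinomial_spec univ (homogenize n v)
  simp only [homogenize, Fintype.prod_option, Fintype.sum_option, Option.elim_none,
    Option.elim_some, Nat.sub_add_cancel hv] at hspec
  rw [bern, ← hspec]
  simp only [baryCoords, homogenize, Fintype.prod_option, Option.elim_none, Option.elim_some]
  push_cast
  field_simp

theorem sum_mul_bern_eq_sum_piAntidiag (F : (Fin k → ℕ) → ℝ) (x : Fin k → ℝ) :
    ∑ v ∈ multiIndices k n, F v * bern k n v x =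
      ∑ w ∈ piAntidiag univ n, F (fun i => w (some i)) *
        (Nat.multinomial univ w * ∏ o, baryCoords x o ^ w o) := by
  refine sum_nbij' (homogenize n) (fun w i => w (some i)) (fun v hv => ?_) (fun w hw => ?_)
    (fun v _ => rfl) (fun w hw => ?_) (fun v hv => ?_)
  · simp [homogenize, Fintype.sum_option, Nat.sub_add_cancel (mem_multiIndices.1 hv)]
  · simp only [mem_piAntidiag, Fintype.sum_option] at hw
    simp [mem_multiIndices, ← hw.1]
  · simp only [mem_piAntidiag, Fintype.sum_option] at hw
    funext o
    cases o <;> simp [homogenize, ← hw.1]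
  · rw [bern_eq_multinomial (mem_multiIndices.1 hv)]
    rfl

theorem sum_bern (x : Fin k → ℝ) : ∑ v ∈ multiIndices k n, bern k n v x = 1 := by
  have h := sum_mul_bern_eq_sum_piAntidiag (n := n) 1 x
  simp only [Pi.one_apply, one_mul] at h
  rw [h, ← sum_pow_eq_sum_piAntidiag, sum_baryCoords, one_pow]

theorem sum_mul_bern_eq_sum_range (g : ℕ → ℝ) (i : Fin k) (x : Fin k → ℝ) :
    ∑ v ∈ multiIndices k n, g (v i) * bern k n v x =
      ∑ ν ∈ range (n + 1), g ν * (n.choose ν * x i ^ ν * (1 - x i) ^ (n - ν)) := by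
  have hrest : ∑ o ∈ univ.erase (some i), baryCoords x o = 1 - x i := by
    rw [← sum_baryCoords x, ← add_sum_erase _ _ (mem_univ (some i))]
    simp [baryCoords]
  have hmarg := sum_piAntidiag_cons_mul_multinomial (notMem_erase (some i) univ) g (baryCoords x) n
  rw [cons_eq_insert, insert_erase (mem_univ _), hrest] at hmarg
  rw [sum_mul_bern_eq_sum_piAntidiag (fun v => g (v i)), hmarg,
    Nat.sum_antidiagonal_eq_sum_range_succ_mk]
  rfl

theorem bern_nonneg {x : Fin k → ℝ} (hx : x ∈ stdSimplex' k) (v : Fin k → ℕ) :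
    0 ≤ bern k n v x :=
  mul_nonneg (mul_nonneg (by positivity) (prod_nonneg fun i _ => pow_nonneg (hx.1 i).1 _))
    (pow_nonneg (sub_nonneg.2 hx.2) _)

theorem div_mem_stdSimplex' {v : Fin k → ℕ} (hv : v ∈ multiIndices k n) :
    (fun i => (v i : ℝ) / n) ∈ stdSimplex' k := by
  have hv := mem_multiIndices.1 hv
  refine ⟨fun i => ⟨by positivity, div_le_one_of_le₀ ?_ n.cast_nonneg⟩, ?_⟩
  · exact_mod_cast (single_le_sum (fun j _ => Nat.zero_le (v j)) (mem_univ i)).trans hv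
  · rw [← sum_div]
    exact div_le_one_of_le₀ (by exact_mod_cast hv) n.cast_nonneg

theorem sum_sq_sub_mul_bern (hn : n ≠ 0) {x : Fin k → ℝ} (i : Fin k) (hxi : x i ∈ I) :
    ∑ v ∈ multiIndices k n, ((v i : ℝ) / n - x i) ^ 2 * bern k n v x = x i * (1 - x i) / n := by
  rw [sum_mul_bern_eq_sum_range (fun ν => ((ν : ℝ) / n - x i) ^ 2), sum_range,
    ← bernstein.variance hn ⟨x i, hxi⟩]
  refine sum_congr rfl fun ν _ => ?_
  rw [bernstein_apply]
  simp only [bernstein.z]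
  ring

theorem sum_bern_far_le (hn : n ≠ 0) {x : Fin k → ℝ} (hx : x ∈ stdSimplex' k) {δ : ℝ}
    (hδ : 0 < δ) :
    ∑ v ∈ multiIndices k n with δ ≤ dist (fun i => (v i : ℝ) / n) x, bern k n v x ≤
      k / (δ ^ 2 * n) := by
  calc ∑ v ∈ multiIndices k n with δ ≤ dist (fun i => (v i : ℝ) / n) x, bern k n v x
      ≤ ∑ v ∈ multiIndices k n with δ ≤ dist (fun i => (v i : ℝ) / n) x,
          (∑ i, ((v i : ℝ) / n - x i) ^ 2) / δ ^ 2 * bern k n v x := by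
        refine sum_le_sum fun v hv => le_mul_of_one_le_left (bern_nonneg hx v) ?_
        rw [one_le_div (by positivity)]
        exact (pow_le_pow_left₀ hδ.le (mem_filter.1 hv).2 2).trans (dist_sq_le_sum_sq _ _)
    _ ≤ ∑ v ∈ multiIndices k n, (∑ i, ((v i : ℝ) / n - x i) ^ 2) / δ ^ 2 * bern k n v x :=
        sum_le_sum_of_subset_of_nonneg (filter_subset _ _) fun v _ _ =>
          mul_nonneg (by positivity) (bern_nonneg hx v)
    _ = ∑ i, (x i * (1 - x i) / n) / δ ^ 2 := by
        simp only [← sum_sq_sub_mul_bern hn _ (hx.1 _), sum_div, sum_mul]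
        rw [sum_comm]
        refine sum_congr rfl fun i _ => sum_congr rfl fun v _ => by ring
    _ ≤ ∑ _i : Fin k, 1 / (δ ^ 2 * n) := by
        refine sum_le_sum fun i _ => ?_
        have h0 := (hx.1 i).1
        have h1 := (hx.1 i).2
        rw [div_div, mul_comm (n : ℝ)]
        gcongr
        nlinarith
    _ = k / (δ ^ 2 * n) := by simp [div_eq_mul_inv]

noncomputable def bernApprox (k : ℕ) (f : (Fin k → ℝ) → ℝ) (n : ℕ) (x : Fin k → ℝ) : ℝ :=
  ∑ v ∈ multiIndices k n, f (fun i => (v i : ℝ) / n) * bern k n v x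

theorem bernApprox_sub_eq (f : (Fin k → ℝ) → ℝ) (n : ℕ) (x : Fin k → ℝ) :
    bernApprox k f n x - f x =
      ∑ v ∈ multiIndices k n, (f (fun i => (v i : ℝ) / n) - f x) * bern k n v x := by
  simp only [bernApprox, sub_mul, sum_sub_distrib, ← mul_sum, sum_bern, mul_one]

theorem abs_bernApprox_sub_le {f : (Fin k → ℝ) → ℝ} {M η δ : ℝ}
    (hM : ∀ y ∈ stdSimplex' k, |f y| ≤ M)
    (hfδ : ∀ y ∈ stdSimplex' k, ∀ z ∈ stdSimplex' k, dist y z < δ → dist (f y) (f z) < η)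
    (hδ : 0 < δ) (hn : n ≠ 0) {x : Fin k → ℝ} (hx : x ∈ stdSimplex' k) :
    |bernApprox k f n x - f x| ≤ η + 2 * M * (k / (δ ^ 2 * n)) := by
  set y : (Fin k → ℕ) → Fin k → ℝ := fun v i => (v i : ℝ) / n
  have hy : ∀ v ∈ multiIndices k n, y v ∈ stdSimplex' k := fun v hv => div_mem_stdSimplex' hv
  have hη : 0 ≤ η := dist_nonneg.trans (hfδ x hx x hx (by simpa using hδ)).le
  have hM0 : 0 ≤ M := (abs_nonneg _).trans (hM x hx)
  rw [bernApprox_sub_eq]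
  calc |∑ v ∈ multiIndices k n, (f (y v) - f x) * bern k n v x|
      ≤ ∑ v ∈ multiIndices k n, |f (y v) - f x| * bern k n v x := by
        refine (abs_sum_le_sum_abs _ _).trans_eq (sum_congr rfl fun v _ => ?_)
        rw [abs_mul, abs_of_nonneg (bern_nonneg hx v)]
    _ = ∑ v ∈ multiIndices k n with ¬δ ≤ dist (y v) x, |f (y v) - f x| * bern k n v x +
          ∑ v ∈ multiIndices k n with δ ≤ dist (y v) x, |f (y v) - f x| * bern k n v x := by
        rw [add_comm, sum_filter_add_sum_filter_not]
    _ ≤ ∑ v ∈ multiIndices k n with ¬δ ≤ dist (y v) x, η * bern k n v x +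
          ∑ v ∈ multiIndices k n with δ ≤ dist (y v) x, 2 * M * bern k n v x := by
        refine add_le_add (sum_le_sum fun v hv => ?_) (sum_le_sum fun v hv => ?_) <;>
          refine mul_le_mul_of_nonneg_right ?_ (bern_nonneg hx v) <;>
          obtain ⟨hvn, hvδ⟩ := mem_filter.1 hv
        · rw [← Real.dist_eq]
          exact (hfδ _ (hy v hvn) x hx (not_le.1 hvδ)).le
        · have := hM _ (hy v hvn)
          have := hM x hx
          linarith [abs_sub (f (y v)) (f x)]
    _ ≤ η * 1 + 2 * M * (k / (δ ^ 2 * n)) := by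
        rw [← mul_sum, ← mul_sum]
        gcongr
        · rw [← sum_bern (n := n) x]
          exact sum_le_sum_of_subset_of_nonneg (filter_subset _ _) fun v _ _ => bern_nonneg hx v
        · exact sum_bern_far_le hn hx hδ
    _ = η + 2 * M * (k / (δ ^ 2 * n)) := by rw [mul_one]

end MvBernstein

open MvBernstein

theorem bern_tendstoUniformlyOn_general (k : ℕ) (f : (Fin k → ℝ) → ℝ)
    (hf : ContinuousOn f (stdSimplex' k)) :
    TendstoUniformlyOn
      (fun n x =>
        ∑ v ∈ (Fintype.piFinset fun _ : Fin k => Finset.range (n + 1)).filter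
            (fun v => ∑ i, v i ≤ n),
          f (fun i => (v i : ℝ) / n) * bern k n v x)
      f Filter.atTop (stdSimplex' k) := by
  change TendstoUniformlyOn (bernApprox k f) f atTop (stdSimplex' k)
  have hK := isCompact_stdSimplex' k
  obtain ⟨M, hM⟩ := hK.exists_bound_of_continuousOn hf
  rw [Metric.tendstoUniformlyOn_iff]
  intro ε hε
  obtain ⟨δ, hδ, hfδ⟩ := Metric.uniformContinuousOn_iff.1
    (hK.uniformContinuousOn_of_continuous hf) (ε / 2) (half_pos hε)
  have hfar := tendsto_const_div_atTop_nhds_zero_nat (2 * M * k / δ ^ 2)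
  filter_upwards [hfar.eventually_lt_const (half_pos hε), eventually_ne_atTop 0]
    with n hsmall hn x hx
  rw [dist_comm, Real.dist_eq]
  calc |bernApprox k f n x - f x| ≤ ε / 2 + 2 * M * (k / (δ ^ 2 * n)) :=
        abs_bernApprox_sub_le hM hfδ hδ hn hx
    _ = ε / 2 + 2 * M * k / δ ^ 2 / n := by ring
    _ < ε := by linarith

/-- If `f` is continuous on `Δ_k`, its Bernstein approximants
`𝔹_n(f|x) = ∑_{|v| ≤ n} f(v/n) B_{v,n}(x)` converge to `f` uniformly on `Δ_k`. -/
theorem bern_tendstoUniformlyOn (k : ℕ) (hk : 1 ≤ k) (f : (Fin k → ℝ) → ℝ)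
    (hf : ContinuousOn f (stdSimplex' k)) :
    TendstoUniformlyOn
      (fun n x =>
        ∑ v ∈ (Fintype.piFinset fun _ : Fin k => Finset.range (n + 1)).filter
            (fun v => ∑ i, v i ≤ n),
          f (fun i => (v i : ℝ) / n) * bern k n v x)
      f Filter.atTop (stdSimplex' k) :=
  bern_tendstoUniformlyOn_general k f hf
end

section
/- Let q be a real number with 0 < q < 1. For n ∈ ℕ, any multi-index v ∈ ℕ^k with |v| ≤ n, any index j with 1 ≤ j ≤ k, and any x ∈ Δ_k, the symmetry identity B_{v,n}(T_{j,1}(x) | q) = B_{T_{j,n}(v), n}(x | q) holds, where T_{j,m}(y) = (y_1,…,y_{j−1}, m−|y|, y_{j+1},…,y_k) replaces the j-th coordinate of y by m−|y|. -/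
/-- The `q`-number `[y]_q = (1 - q^y)/(1 - q)` for a real exponent `y`. -/
noncomputable def qNum (q y : ℝ) : ℝ := (1 - q ^ y) / (1 - q)

/-- The `q`-Bernstein polynomial `B_{v,n}(x|q)` on the `k`-simplex. -/
noncomputable def qBern (q : ℝ) (k n : ℕ) (v : Fin k → ℕ) (x : Fin k → ℝ) : ℝ :=
  ((n.factorial : ℝ) / ((∏ i, ((v i).factorial : ℝ)) * ((n - ∑ i, v i).factorial : ℝ))) *
    (∏ i, qNum q (x i) ^ v i) * qNum q (1 - ∑ i, x i) ^ (n - ∑ i, v i)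

lemma prod_apply_update' {α β M : Type*} [CommMonoid M] [DecidableEq α] [Fintype α]
    (v : α → β) (j : α) (b : β) (g : α → β → M) :
    ∏ i, g i (Function.update v j b i) = g j b * ∏ i ∈ Finset.univ.erase j, g i (v i) := by
  rw [← Finset.mul_prod_erase _ _ (Finset.mem_univ j), Function.update_self]
  exact congrArg _ (Finset.prod_congr rfl fun i hi => by
    rw [Function.update_of_ne (Finset.ne_of_mem_erase hi)])

lemma sum_apply_update' {α β M : Type*} [AddCommMonoid M] [DecidableEq α] [Fintype α]
    (v : α → β) (j : α) (b : β) (g : α → β → M) :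
    ∑ i, g i (Function.update v j b i) = g j b + ∑ i ∈ Finset.univ.erase j, g i (v i) :=
  prod_apply_update' (M := Multiplicative M) v j b g

/-- `q`-symmetry: `B_{v,n}(T_{j,1}(x)|q) = B_{T_{j,n}(v),n}(x|q)` where `T_{j,m}`
replaces the `j`-th coordinate of `y` by `m - |y|`. -/
theorem qBern_symmetry_update (q : ℝ) (hq0 : 0 < q) (hq1 : q < 1)
    (k n : ℕ) (hk : 1 ≤ k)
    (v : Fin k → ℕ) (hvn : ∑ i, v i ≤ n) (j : Fin k)
    (x : Fin k → ℝ) (hx : x ∈ stdSimplex' k) :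
    qBern q k n v (Function.update x j (1 - ∑ i, x i)) =
      qBern q k n (Function.update v j (n - ∑ i, v i)) x := by
  classical
  unfold qBern
  set S := ∑ i, x i with hS
  set V := ∑ i, v i with hV
  have hxs : S = x j + ∑ i ∈ Finset.univ.erase j, x i :=
    (Finset.add_sum_erase _ _ (Finset.mem_univ j)).symm
  have hvs : V = v j + ∑ i ∈ Finset.univ.erase j, v i :=
    (Finset.add_sum_erase _ _ (Finset.mem_univ j)).symm
  have hxsum : ∑ i, Function.update x j (1 - S) i
      = (1 - S) + ∑ i ∈ Finset.univ.erase j, x i :=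
    sum_apply_update' x j (1 - S) (fun _ y => y)
  have hvsum : ∑ i, Function.update v j (n - V) i
      = (n - V) + ∑ i ∈ Finset.univ.erase j, v i :=
    sum_apply_update' v j (n - V) (fun _ y => y)
  have h1 : 1 - ∑ i, Function.update x j (1 - S) i = x j := by
    rw [hxsum]; linarith [hxs]
  have h2 : n - ∑ i, Function.update v j (n - V) i = v j := by
    rw [hvsum]; omega
  rw [h1, h2,
    prod_apply_update' x j (1 - S) (fun i y => qNum q y ^ v i),
    prod_apply_update' v j (n - V) (fun i m => qNum q (x i) ^ m),
    prod_apply_update' v j (n - V) (fun _ m => (m.factorial : ℝ)),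
    ← Finset.mul_prod_erase Finset.univ (fun i => ((v i).factorial : ℝ)) (Finset.mem_univ j)]
  ring
end
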